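/- arXiv:1404.2111 — 4 statements merged into one kernel-verified Lean document; each statement's English description precedes it below -/
import Mathlib

section
/- Let T be a well-founded tree on a type α. Then there exists a function w : List α → Fin 2 such that for every s ∈ T: w s = (length of s) mod 2 if and only if there exists an immediate successor t of s in T with w t = (length of s) mod 2. -/
/-- `t` is an immediate successor of `s` in a tree: `t` extends `s` by exactly one element. -/
def ImmSucc {α : Type*} (s t : List α) : Prop := ∃ a : α, t = s ++ [a]

/-- A tree on `α`: a set of finite sequences containing the empty sequence and
closed under initial segments. -/
def IsTree {α : Type*} (T : Set (List α)) : Prop :=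
  [] ∈ T ∧ ∀ s ∈ T, ∀ t : List α, t <+: s → t ∈ T

/-- A well-founded tree: a tree with no infinite chain, i.e. no function
`f : ℕ → List α` with every `f n ∈ T` and each `f (n+1)` an immediate successor of `f n`. -/
def IsWellFoundedTree {α : Type*} (T : Set (List α)) : Prop :=
  IsTree T ∧ ¬∃ f : ℕ → List α, (∀ n, f n ∈ T) ∧ ∀ n, ImmSucc (f n) (f (n + 1))

/-- Existence of the labelling function `w` assigning to every position `s` of the
clopen game on a well-founded tree `T` a "supposedly winning" player `w s`:
`w s = |s| mod 2` iff some immediate successor `t` of `s` in `T` has `w t = |s| mod 2`. -/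
theorem exists_labelling {α : Type*} {T : Set (List α)} (hT : IsWellFoundedTree T) :
    ∃ w : List α → Fin 2, ∀ s ∈ T,
      ((w s : ℕ) = s.length % 2 ↔ ∃ t ∈ T, ImmSucc s t ∧ (w t : ℕ) = s.length % 2) := by
  classical
  obtain ⟨⟨hnil, hclosed⟩, hchain⟩ := hT
  set r : List α → List α → Prop := fun t s => t ∈ T ∧ ImmSucc s t with hr
  have key : WellFounded r := by
    by_contra hw
    apply hchain
    have hex : ∃ a, ¬ Acc r a := by
      by_contra h
      push_neg at h
      exact hw ⟨h⟩
    have step : ∀ x, ¬ Acc r x → ∃ y, r y x ∧ ¬ Acc r y := by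
      intro x hx
      by_contra h
      push_neg at h
      exact hx (Acc.intro x fun y hy => by_contra fun hny => (hny (h y hy)).elim)
    obtain ⟨a, ha⟩ := hex
    let f : ℕ → {x : List α // ¬ Acc r x} := fun n =>
      Nat.rec ⟨a, ha⟩ (fun _ p => ⟨(step p.1 p.2).choose, (step p.1 p.2).choose_spec.2⟩) n
    have hf : ∀ n, r (f (n + 1)).1 (f n).1 := fun n => (step (f n).1 (f n).2).choose_spec.1
    refine ⟨fun n => (f (n + 1)).1, fun n => (hf n).1, fun n => (hf (n + 1)).2⟩
  let F : ∀ s : List α, (∀ t, r t s → Fin 2) → Fin 2 := fun s IH =>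
    if ∃ t, ∃ h : r t s, ((IH t h : Fin 2) : ℕ) = s.length % 2 then
      ⟨s.length % 2, Nat.mod_lt _ two_pos⟩
    else ⟨(s.length + 1) % 2, Nat.mod_lt _ two_pos⟩
  let w : List α → Fin 2 := key.fix F
  have hw : ∀ s, w s = F s (fun t _ => w t) := fun s => key.fix_eq F s
  refine ⟨w, fun s _ => ?_⟩
  rw [hw s]
  simp only [F]
  split_ifs with h
  · constructor
    · intro _
      obtain ⟨t, ⟨htT, hsucc⟩, hval⟩ := h
      exact ⟨t, htT, hsucc, hval⟩
    · intro _
      rfl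
  · constructor
    · intro habs
      have : (s.length + 1) % 2 = s.length % 2 := habs
      omega
    · rintro ⟨t, htT, hsucc, hval⟩
      exact absurd ⟨t, ⟨htT, hsucc⟩, hval⟩ h
end

section
/- Let T be a well-founded tree on a type α and let w : List α → Fin 2 satisfy: for every s ∈ T, w s = (length of s) mod 2 if and only if there exists an immediate successor t of s in T with w t = (length of s) mod 2. If w applied to the empty sequence equals 0 then Player I has a winning strategy in the clopen game G^T, and if it equals 1 then Player II has a winning strategy in G^T. -/
/-- A winning strategy for Player I in the clopen game `𝒢^T`: a subtree `σ ⊆ T`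
(containing `[]` and closed under initial segments) such that every `s ∈ σ` of even
length has exactly one immediate successor in `σ`, and for every `s ∈ σ` of odd
length every immediate successor of `s` in `T` belongs to `σ`. -/
def WinStratI {α : Type*} (T σ : Set (List α)) : Prop :=
  σ ⊆ T ∧ [] ∈ σ ∧ (∀ s ∈ σ, ∀ t : List α, t <+: s → t ∈ σ) ∧
    (∀ s ∈ σ, Even s.length → ∃! t : List α, t ∈ σ ∧ ImmSucc s t) ∧
    (∀ s ∈ σ, Odd s.length → ∀ t ∈ T, ImmSucc s t → t ∈ σ)

/-- A winning strategy for Player II in the clopen game `𝒢^T`: defined as for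
Player I, interchanging even with odd. -/
def WinStratII {α : Type*} (T σ : Set (List α)) : Prop :=
  σ ⊆ T ∧ [] ∈ σ ∧ (∀ s ∈ σ, ∀ t : List α, t <+: s → t ∈ σ) ∧
    (∀ s ∈ σ, Odd s.length → ∃! t : List α, t ∈ σ ∧ ImmSucc s t) ∧
    (∀ s ∈ σ, Even s.length → ∀ t ∈ T, ImmSucc s t → t ∈ σ)

lemma prefix_concat_cases {α : Type*} {l q : List α} {b : α}
    (h : l <+: q ++ [b]) : l <+: q ∨ l = q ++ [b] := by
  obtain ⟨r, hr⟩ := h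
  rcases List.eq_nil_or_concat r with rfl | ⟨r', c, rfl⟩
  · right; simpa using hr
  · left
    have h2 : (l ++ r') ++ [c] = q ++ [b] := by simpa [List.append_assoc] using hr
    exact ⟨r', (List.append_inj' h2 rfl).1⟩

lemma key {α : Type*} {T : Set (List α)} (hT : IsTree T) (w : List α → Fin 2)
    (hw : ∀ s ∈ T,
      ((w s : ℕ) = s.length % 2 ↔ ∃ t ∈ T, ImmSucc s t ∧ (w t : ℕ) = s.length % 2))
    (k : Fin 2) (h0 : w [] = k) :
    ∃ σ : Set (List α), σ ⊆ T ∧ [] ∈ σ ∧ (∀ s ∈ σ, ∀ t : List α, t <+: s → t ∈ σ) ∧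
      (∀ s ∈ σ, s.length % 2 = (k:ℕ) → ∃! t : List α, t ∈ σ ∧ ImmSucc s t) ∧
      (∀ s ∈ σ, s.length % 2 ≠ (k:ℕ) → ∀ t ∈ T, ImmSucc s t → t ∈ σ) := by
  classical
  set P : List α → Prop := fun s => s ∈ T ∧ s.length % 2 = (k:ℕ) ∧ w s = k with hP
  have hPspec : ∀ s, P s → ∃ t, t ∈ T ∧ ImmSucc s t ∧ w t = k := by
    rintro s ⟨hs, hl, hws⟩
    obtain ⟨t, ht, hst, hwt⟩ := (hw s hs).mp (by rw [hws, hl])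
    exact ⟨t, ht, hst, Fin.ext (hwt.trans hl)⟩
  set pick : List α → List α := fun s => if h : P s then (hPspec s h).choose else [] with hpick
  have pickSpec : ∀ s, P s → pick s ∈ T ∧ ImmSucc s (pick s) ∧ w (pick s) = k := by
    intro s h
    simp only [hpick, dif_pos h]
    exact (hPspec s h).choose_spec
  set σ : Set (List α) :=
    {s | s ∈ T ∧ ∀ p a, p ++ [a] <+: s → p.length % 2 = (k:ℕ) → p ++ [a] = pick p} with hσ
  have hsub : σ ⊆ T := fun s hs => hs.1
  have hnil : [] ∈ σ := by
    refine ⟨hT.1, fun p a h _ => ?_⟩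
    have := List.prefix_nil.mp h
    simp at this
  have hclosed : ∀ s ∈ σ, ∀ t : List α, t <+: s → t ∈ σ := by
    rintro s ⟨hsT, hscond⟩ t ht
    exact ⟨hT.2 s hsT t ht, fun p a h hl => hscond p a (h.trans ht) hl⟩
  have hinv : ∀ s ∈ σ, w s = k := by
    intro s
    induction s using List.reverseRecOn with
    | nil => exact fun _ => h0
    | append_singleton p a ih =>
      intro hs
      have hp : p ∈ σ := hclosed _ hs p ⟨[a], rfl⟩
      have hwp := ih hp
      by_cases hl : p.length % 2 = (k:ℕ)
      · have heq : p ++ [a] = pick p := hs.2 p a (List.prefix_refl _) hl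
        rw [heq]
        exact (pickSpec p ⟨hp.1, hl, hwp⟩).2.2
      · have hne : (w p : ℕ) ≠ p.length % 2 := by
          rw [hwp]; exact fun h => hl h.symm
        have hns : ¬ ((w (p ++ [a]) : ℕ) = p.length % 2) := fun h =>
          hne ((hw p hp.1).mpr ⟨p ++ [a], hs.1, ⟨a, rfl⟩, h⟩)
        have h1 := (w (p ++ [a])).is_lt
        have h2 := k.is_lt
        exact Fin.ext (by omega)
  refine ⟨σ, hsub, hnil, hclosed, ?_, ?_⟩
  · intro s hs hl
    have hPs : P s := ⟨hs.1, hl, hinv s hs⟩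
    obtain ⟨hpT, ⟨b, hb⟩, hpw⟩ := pickSpec s hPs
    refine ⟨pick s, ⟨⟨hpT, ?_⟩, ⟨b, hb⟩⟩, ?_⟩
    · intro p a h hl'
      rw [hb] at h
      rcases prefix_concat_cases h with h' | h'
      · exact hs.2 p a h' hl'
      · obtain ⟨rfl, hab⟩ := List.append_inj' h' rfl
        rw [List.singleton_inj.mp hab, ← hb]
    · rintro t ⟨htσ, ⟨a, rfl⟩⟩
      exact htσ.2 s a (List.prefix_refl _) hl
  · rintro s hs hl t htT ⟨a, rfl⟩
    refine ⟨htT, fun p b h hl' => ?_⟩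
    rcases prefix_concat_cases h with h' | h'
    · exact hs.2 p b h' hl'
    · exfalso
      have : p.length = s.length := by
        have := congrArg List.length h'; simp at this; omega
      exact hl (this ▸ hl')

/-- From the labelling `w` one extracts a winning strategy for Player I in `𝒢^T`
if `w ∅ = 0`, and for Player II if `w ∅ = 1`. -/
theorem winning_strategy_of_labelling {α : Type*} {T : Set (List α)}
    (hT : IsWellFoundedTree T) (w : List α → Fin 2)
    (hw : ∀ s ∈ T,
      ((w s : ℕ) = s.length % 2 ↔ ∃ t ∈ T, ImmSucc s t ∧ (w t : ℕ) = s.length % 2)) :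
    (w [] = 0 → ∃ σ : Set (List α), WinStratI T σ) ∧
      (w [] = 1 → ∃ σ : Set (List α), WinStratII T σ) := by
  obtain ⟨hTree, -⟩ := hT
  constructor
  · intro h0
    obtain ⟨σ, h1, h2, h3, h4, h5⟩ := key hTree w hw 0 h0
    refine ⟨σ, h1, h2, h3, ?_, ?_⟩
    · intro s hs he
      exact h4 s hs (by simpa [Nat.even_iff] using he)
    · intro s hs ho
      exact h5 s hs (by have := Nat.odd_iff.mp ho; simp; omega)
  · intro h0
    obtain ⟨σ, h1, h2, h3, h4, h5⟩ := key hTree w hw 1 h0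
    refine ⟨σ, h1, h2, h3, ?_, ?_⟩
    · intro s hs ho
      exact h4 s hs (by simpa [Nat.odd_iff] using ho)
    · intro s hs he
      exact h5 s hs (by have := Nat.even_iff.mp he; simp; omega)
end

section
/- Let T be a tree on a type α, let p be one of the two players, let σ ⊆ T be a winning strategy for player p in the clopen game G^T, and let s ∈ σ have even length. Then the localized set σ_s = {u : List α | s ++ u ∈ σ} is a winning strategy for player p in the clopen game on the localized tree T_s = {u : List α | s ++ u ∈ T}. -/
/-- A winning strategy for player `p` (`p = 0` for Player I, who moves at positions of
even length, `p = 1` for Player II, who moves at positions of odd length) in the clopen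
game `𝒢^T`: a subtree `σ ⊆ T` containing `[]` and closed under initial segments such
that every `s ∈ σ` at which `p` moves has exactly one immediate successor in `σ`, and
every `s ∈ σ` at which the opponent moves has all its immediate `T`-successors in `σ`. -/
def WinStrat {α : Type*} (p : Fin 2) (T σ : Set (List α)) : Prop :=
  σ ⊆ T ∧ [] ∈ σ ∧ (∀ s ∈ σ, ∀ t : List α, t <+: s → t ∈ σ) ∧
    (∀ s ∈ σ, s.length % 2 = (p : ℕ) → ∃! t : List α, t ∈ σ ∧ ImmSucc s t) ∧
    (∀ s ∈ σ, s.length % 2 ≠ (p : ℕ) → ∀ t ∈ T, ImmSucc s t → t ∈ σ)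

/-- Localization of a winning strategy at a position `s ∈ σ` of even length: the set
`σ_s = {u | s ++ u ∈ σ}` is a winning strategy for the same player in the clopen game
on the localized tree `T_s = {u | s ++ u ∈ T}`. -/
theorem winStrat_localization {α : Type*} {T : Set (List α)} (hT : IsTree T)
    (p : Fin 2) (σ : Set (List α)) (hσ : WinStrat p T σ)
    (s : List α) (hs : s ∈ σ) (hlen : Even s.length) :
    WinStrat p {u : List α | s ++ u ∈ T} {u : List α | s ++ u ∈ σ} := by
  obtain ⟨hsub, hnil, hpre, hmove, hopp⟩ := hσ
  have hlen2 : ∀ u : List α, (s ++ u).length % 2 = u.length % 2 := by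
    intro u
    rw [List.length_append, Nat.add_mod]
    obtain ⟨k, hk⟩ := hlen
    omega
  refine ⟨fun u hu => hsub hu, by simpa using hs, ?_, ?_, ?_⟩
  · intro u hu t ht
    exact hpre _ hu _ ((List.prefix_append_right_inj s).mpr ht)
  · intro u hu hmod
    obtain ⟨t, ⟨htσ, a, rfl⟩, huniq⟩ := hmove _ hu (by rw [hlen2]; exact hmod)
    refine ⟨u ++ [a], ⟨by simpa using htσ, a, rfl⟩, ?_⟩
    rintro v ⟨hvσ, b, rfl⟩
    have := huniq (s ++ (u ++ [b])) ⟨by simpa using hvσ, b, by simp⟩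
    simpa using this
  · rintro u hu hmod t ht ⟨a, rfl⟩
    exact hopp _ hu (by rw [hlen2]; exact hmod) _ ht ⟨a, by simp⟩
end

section
/- Let T be a well-founded tree on a type α and let w, w' : List α → Fin 2 both satisfy the labelling condition: for every s ∈ T, the value at s equals (length of s) mod 2 if and only if there exists an immediate successor t of s in T whose value equals (length of s) mod 2. Then w and w' agree on all elements of T. -/
/-- Uniqueness of the labelling function on a well-founded tree: any two functions
`w`, `w'` satisfying the labelling condition agree on all elements of `T`. -/
theorem labelling_unique {α : Type*} {T : Set (List α)} (hT : IsWellFoundedTree T)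
    (w w' : List α → Fin 2)
    (hw : ∀ s ∈ T,
      ((w s : ℕ) = s.length % 2 ↔ ∃ t ∈ T, ImmSucc s t ∧ (w t : ℕ) = s.length % 2))
    (hw' : ∀ s ∈ T,
      ((w' s : ℕ) = s.length % 2 ↔ ∃ t ∈ T, ImmSucc s t ∧ (w' t : ℕ) = s.length % 2)) :
    ∀ s ∈ T, w s = w' s := by
  classical
  obtain ⟨hTree, hchain⟩ := hT
  set R : List α → List α → Prop := fun t s => t ∈ T ∧ ImmSucc s t with hR
  have hacc : ∀ s ∈ T, Acc R s := by
    by_contra h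
    push_neg at h
    obtain ⟨s0, hs0, hns0⟩ := h
    have step : ∀ x : {l // l ∈ T ∧ ¬ Acc R l}, ∃ y : {l // l ∈ T ∧ ¬ Acc R l}, R y.1 x.1 := by
      rintro ⟨x, hx, hnx⟩
      by_contra hc
      push_neg at hc
      apply hnx
      constructor
      intro y hy
      by_contra hny
      exact hc ⟨y, hy.1, hny⟩ hy
    choose g hg using step
    let f : ℕ → {l // l ∈ T ∧ ¬ Acc R l} := fun n => Nat.rec ⟨s0, hs0, hns0⟩ (fun _ x => g x) n
    exact hchain ⟨fun n => (f n).1, fun n => (f n).2.1, fun n => (hg (f n)).2⟩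
  have main : ∀ s, Acc R s → s ∈ T → w s = w' s := by
    intro s ha
    induction ha with
    | intro x hx ih =>
      intro hxT
      have key : ((w x : ℕ) = x.length % 2) ↔ ((w' x : ℕ) = x.length % 2) := by
        rw [hw x hxT, hw' x hxT]
        constructor
        · rintro ⟨t, htT, hst, hv⟩
          exact ⟨t, htT, hst, by rw [← ih t ⟨htT, hst⟩ htT]; exact hv⟩
        · rintro ⟨t, htT, hst, hv⟩
          exact ⟨t, htT, hst, by rw [ih t ⟨htT, hst⟩ htT]; exact hv⟩
      have h1 := (w x).isLt
      have h2 := (w' x).isLt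
      have h3 := Nat.mod_two_eq_zero_or_one x.length
      apply Fin.ext
      omega
  exact fun s hs => main s (hacc s hs) hs
end
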